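/- Let n ≥ 2 and let D be the distance matrix of the directed cycle on n vertices, D_{ij} = (j - i) mod n represented in {0,...,n-1}. Then D is invertible and D^{-1} = -(1/n)(I - P) + (2/(n^2(n-1))) J, where P is the cyclic permutation matrix P_{i,(i+1) mod n} = 1 and J is the n×n all-ones matrix. -/

import Mathlib

open Matrix Finset

theorem stmt_14 {n : ℕ} [NeZero n] (hn : 2 ≤ n)
    (D : Matrix (Fin n) (Fin n) ℝ)
    (hD : D = Matrix.of fun i j => (((j - i : Fin n) : ℕ) : ℝ))
    (P : Matrix (Fin n) (Fin n) ℝ)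
    (hP : P = Matrix.of fun i j => if j = i + 1 then (1 : ℝ) else 0) :
    IsUnit D.det ∧
      D⁻¹ = -((n : ℝ)⁻¹ • (1 - P)) +
        (2 / ((n : ℝ) ^ 2 * ((n : ℝ) - 1))) • (Matrix.of fun _ _ => (1 : ℝ)) := by
  obtain ⟨m, rfl⟩ : ∃ m, n = m + 1 := ⟨n - 1, by omega⟩
  have hn0 : ((m + 1 : ℕ) : ℝ) ≠ 0 := Nat.cast_ne_zero.mpr (NeZero.ne _)
  have hn2 : (2:ℝ) ≤ ((m + 1 : ℕ) : ℝ) := by exact_mod_cast hn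
  have hn1 : ((m + 1 : ℕ) : ℝ) - 1 ≠ 0 := by linarith
  set c : ℝ := 2 / (((m + 1 : ℕ) : ℝ) ^ 2 * (((m + 1 : ℕ) : ℝ) - 1)) with hc
  set B : Matrix (Fin (m + 1)) (Fin (m + 1)) ℝ :=
    -(((m + 1 : ℕ) : ℝ)⁻¹ • (1 - P)) + c • (Matrix.of fun _ _ => (1 : ℝ)) with hB
  have hm0 : (m:ℝ) ≠ 0 := Nat.cast_ne_zero.mpr (by omega)
  have hmm : ((m + 1 : ℕ):ℝ) - 1 = (m:ℝ) := by push_cast; ring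
  have hcv : c * (((m + 1 : ℕ):ℝ) * (((m + 1 : ℕ):ℝ) - 1) / 2) = ((m + 1 : ℕ):ℝ)⁻¹ := by
    rw [hc, hmm]; field_simp
  have hsum : ∀ i : Fin (m + 1), ∑ j : Fin (m + 1), (((j - i : Fin (m + 1)) : ℕ) : ℝ)
      = ((m + 1 : ℕ) : ℝ) * (((m + 1 : ℕ):ℝ) - 1) / 2 := by
    intro i
    have h1 : ∑ j : Fin (m + 1), (((j - i : Fin (m + 1)) : ℕ) : ℝ)
        = ∑ j : Fin (m + 1), ((j : ℕ) : ℝ) :=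
      Fintype.sum_equiv (Equiv.subRight i) _ _ (fun j => rfl)
    rw [h1, Fin.sum_univ_eq_sum_range (fun a => ((a:ℕ):ℝ)) (m + 1), ← Nat.cast_sum]
    have hg : (∑ i ∈ range (m + 1), i) * 2 = (m + 1) * m := by
      simpa using Finset.sum_range_id_mul_two (m + 1)
    have h2 : ((∑ i ∈ range (m + 1), i : ℕ) : ℝ) * 2
        = ((m + 1 : ℕ):ℝ) * (((m + 1 : ℕ):ℝ) - 1) := by
      have h2' : ((∑ i ∈ range (m + 1), i : ℕ) : ℝ) * 2 = (((m + 1) * m : ℕ) : ℝ) := by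
        exact_mod_cast congrArg (Nat.cast : ℕ → ℝ) hg
      rw [h2']; push_cast; ring
    linarith
  have hBjk : ∀ j k : Fin (m + 1), B j k =
      -((m + 1 : ℕ):ℝ)⁻¹ * ((if j = k then (1:ℝ) else 0) - (if k = j + 1 then 1 else 0))
      + c := by
    intro j k
    rw [hB]
    simp only [hP, Matrix.add_apply, Matrix.neg_apply, Matrix.smul_apply, Matrix.sub_apply,
      Matrix.one_apply, Matrix.of_apply, smul_eq_mul]
    ring
  have hDB : D * B = 1 := by
    ext i k
    have expand : (D * B) i k =
        -((m + 1 : ℕ):ℝ)⁻¹ * (∑ j : Fin (m + 1), D i j * (if j = k then 1 else 0))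
        + ((m + 1 : ℕ):ℝ)⁻¹ * (∑ j : Fin (m + 1), D i j * (if k = j + 1 then 1 else 0))
        + c * (∑ j : Fin (m + 1), D i j) := by
      rw [Matrix.mul_apply]
      have step : ∀ j : Fin (m + 1), D i j * B j k =
          -((m + 1 : ℕ):ℝ)⁻¹ * (D i j * (if j = k then 1 else 0))
          + ((m + 1 : ℕ):ℝ)⁻¹ * (D i j * (if k = j + 1 then 1 else 0))
          + c * D i j := by
        intro j; rw [hBjk]; ring
      simp_rw [step, Finset.sum_add_distrib, ← Finset.mul_sum]
    have e1 : (∑ j : Fin (m + 1), D i j * (if j = k then 1 else 0)) = D i k := by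
      simp [Finset.sum_ite_eq', mul_comm]
    have e2 : (∑ j : Fin (m + 1), D i j * (if k = j + 1 then 1 else 0)) = D i (k - 1) := by
      have heq : ∀ j : Fin (m + 1), (k = j + 1) ↔ (j = k - 1) := by
        intro j; constructor <;> intro h <;> simp [h]
      simp_rw [heq]
      simp [Finset.sum_ite_eq', mul_comm]
    have e3 : (∑ j : Fin (m + 1), D i j)
        = ((m + 1 : ℕ):ℝ) * (((m + 1 : ℕ):ℝ) - 1) / 2 := by
      simp only [hD, Matrix.of_apply]; exact hsum i
    rw [expand, e1, e2, e3, hcv]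
    by_cases hik : k = i
    · have d1 : D i k = 0 := by simp [hD, hik]
      have d2 : D i (k - 1) = ((m + 1 : ℕ):ℝ) - 1 := by
        simp only [hD, Matrix.of_apply, hik]
        have h3 : (i - 1 - i : Fin (m + 1)) = -1 := by abel
        rw [h3, Fin.coe_neg_one]
        push_cast
        ring
      rw [d1, d2, hik, Matrix.one_apply_eq]
      field_simp; ring
    · have hne : (k - i : Fin (m + 1)) ≠ 0 := fun h => hik (sub_eq_zero.mp h)
      have hval : 1 ≤ ((k - i : Fin (m + 1)) : ℕ) :=
        Nat.one_le_iff_ne_zero.mpr (fun h => hne (Fin.ext h))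
      have d2 : D i (k - 1) = D i k - 1 := by
        simp only [hD, Matrix.of_apply]
        have h3 : (k - 1 - i : Fin (m + 1)) = (k - i) - 1 := by abel
        rw [h3, Fin.coe_sub_one, if_neg hne, Nat.cast_sub hval]
        norm_num
      rw [d2, Matrix.one_apply_ne (Ne.symm hik)]
      ring
  exact ⟨Matrix.isUnit_det_of_right_inverse hDB, Matrix.inv_eq_right_inv hDB⟩
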